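/- Let λ₀ > 0 and γ ∈ ℝ. There exists a constant C > 0, depending only on λ₀ and γ, such that for every λ ≤ -λ₀ and every continuous f : ℝ → ℝ with compact support contained in (1, ∞), the function u(t) := e^{λ t} ∫_1^t e^{-λ s} f(s) ds is differentiable on [1, ∞) and satisfies u'(t) - λ u(t) = f(t) for all t ≥ 1, together with the weighted estimates λ² ∫_1^∞ u(t)² t^{2γ} dt ≤ C ∫_1^∞ f(t)² t^{2γ} dt and ∫_1^∞ u'(t)² t^{2γ} dt ≤ C ∫_1^∞ f(t)² t^{2γ} dt. -/

import Mathlib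

/-!
Write `u(t) = ∫_1^t e^{λ(t-s)} f(s) ds`. Then `t^γ u(t) = ∫ K(t,s) s^γ f(s) ds` with
`K(t,s) = e^{λ(t-s)} (t/s)^γ` for `1 ≤ s ≤ t`. There `(t/s)^γ ≤ (1 + (t - s))^{max γ 0}`, and this
polynomial growth is absorbed by half of the exponential decay: `K(t,s) ≤ D e^{λ(t-s)/2}` with `D`
depending only on `λ₀, γ`. So `K` is dominated by a convolution kernel of `L¹` norm `2D/|λ|`, and
Schur's test (Cauchy–Schwarz in `s`, then Tonelli) gives `λ² ‖t^γ u‖₂² ≤ 4D² ‖t^γ f‖₂²`. The bound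
for `u' = λu + f` follows from `(a + b)² ≤ 2a² + 2b²`.
-/

open MeasureTheory Set Filter
open scoped ENNReal

section Schur

variable {α β : Type*} [MeasurableSpace α] [MeasurableSpace β] {μ : Measure α} {ν : Measure β}

theorem ENNReal.sq_lintegral_mul_le {w g : α → ℝ≥0∞} (hw : AEMeasurable w μ)
    (hg : AEMeasurable g μ) :
    (∫⁻ a, w a * g a ∂μ) ^ 2 ≤ (∫⁻ a, w a ∂μ) * ∫⁻ a, w a * g a ^ 2 ∂μ := by
  have hsplit : ∀ a, w a * g a = w a ^ (1 / 2 : ℝ) * (w a * g a ^ 2) ^ (1 / 2 : ℝ) := by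
    intro a
    rw [ENNReal.mul_rpow_of_nonneg _ _ (by norm_num), ← mul_assoc,
      ← ENNReal.mul_rpow_of_nonneg _ _ (by norm_num), ← sq, ← ENNReal.rpow_natCast,
      ← ENNReal.rpow_natCast, ← ENNReal.rpow_mul, ← ENNReal.rpow_mul]
    norm_num
  have hholder : ∫⁻ a, w a * g a ∂μ
      ≤ (∫⁻ a, w a ∂μ) ^ (1 / 2 : ℝ) * (∫⁻ a, w a * g a ^ 2 ∂μ) ^ (1 / 2 : ℝ) := by
    simp_rw [hsplit]
    exact lintegral_mul_norm_pow_le hw (hw.mul (hg.pow_const 2)) (by norm_num) (by norm_num)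
      (by norm_num)
  calc (∫⁻ a, w a * g a ∂μ) ^ 2
      ≤ ((∫⁻ a, w a ∂μ) ^ (1 / 2 : ℝ) * (∫⁻ a, w a * g a ^ 2 ∂μ) ^ (1 / 2 : ℝ)) ^ 2 :=
        pow_le_pow_left' hholder 2
    _ = (∫⁻ a, w a ∂μ) * ∫⁻ a, w a * g a ^ 2 ∂μ := by
        rw [← ENNReal.mul_rpow_of_nonneg _ _ (by norm_num), ← ENNReal.rpow_natCast,
          ← ENNReal.rpow_mul]
        norm_num

theorem lintegral_sq_lintegral_mul_le_of_schur [SFinite μ] [SFinite ν] {K : α → β → ℝ≥0∞}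
    (hK : Measurable (Function.uncurry K)) {g : β → ℝ≥0∞} (hg : Measurable g) {A B : ℝ≥0∞}
    (hA : ∀ᵐ x ∂μ, ∫⁻ y, K x y ∂ν ≤ A) (hB : ∀ᵐ y ∂ν, ∫⁻ x, K x y ∂μ ≤ B) :
    ∫⁻ x, (∫⁻ y, K x y * g y ∂ν) ^ 2 ∂μ ≤ A * B * ∫⁻ y, g y ^ 2 ∂ν := by
  have hKg : Measurable (Function.uncurry fun x y => K x y * g y ^ 2) :=
    hK.mul ((hg.pow_const 2).comp measurable_snd)
  calc ∫⁻ x, (∫⁻ y, K x y * g y ∂ν) ^ 2 ∂μ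
      ≤ ∫⁻ x, A * ∫⁻ y, K x y * g y ^ 2 ∂ν ∂μ := by
        refine lintegral_mono_ae (hA.mono fun x hx => ?_)
        exact (ENNReal.sq_lintegral_mul_le hK.of_uncurry_left.aemeasurable
          hg.aemeasurable).trans (mul_le_mul_left hx _)
    _ = A * ∫⁻ y, (∫⁻ x, K x y ∂μ) * g y ^ 2 ∂ν := by
        rw [lintegral_const_mul _ (by exact hKg.lintegral_prod_right'),
          lintegral_lintegral_swap hKg.aemeasurable]
        simp_rw [lintegral_mul_const _ hK.of_uncurry_right]
    _ ≤ A * ∫⁻ y, B * g y ^ 2 ∂ν := by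
        gcongr A * ?_
        exact lintegral_mono_ae (hB.mono fun y hy => mul_le_mul_left hy _)
    _ = A * B * ∫⁻ y, g y ^ 2 ∂ν := by
        rw [lintegral_const_mul _ (hg.pow_const 2), mul_assoc]

end Schur

theorem lintegral_sq_lintegral_mul_le_of_le_sub {S : Set ℝ} (hS : MeasurableSet S)
    {K : ℝ → ℝ → ℝ≥0∞} (hK : Measurable (Function.uncurry K)) {k : ℝ → ℝ≥0∞}
    (hKk : ∀ t, ∀ s ∈ S, K t s ≤ k (t - s)) {g : ℝ → ℝ≥0∞} (hg : Measurable g) :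
    ∫⁻ t in S, (∫⁻ s in S, K t s * g s) ^ 2 ≤ (∫⁻ r, k r) ^ 2 * ∫⁻ s in S, g s ^ 2 := by
  rw [sq (∫⁻ r, k r)]
  refine lintegral_sq_lintegral_mul_le_of_schur hK hg (Eventually.of_forall fun t => ?_)
    ((ae_restrict_mem hS).mono fun s hs => ?_)
  · calc ∫⁻ s in S, K t s ≤ ∫⁻ s in S, k (t - s) := setLIntegral_mono' hS (hKk t)
      _ ≤ ∫⁻ s, k (t - s) := setLIntegral_le_lintegral _ _
      _ = ∫⁻ r, k r := lintegral_sub_left_eq_self k t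
  · calc ∫⁻ t in S, K t s ≤ ∫⁻ t in S, k (t - s) := lintegral_mono fun t => hKk t s hs
      _ ≤ ∫⁻ t, k (t - s) := setLIntegral_le_lintegral _ _
      _ = ∫⁻ r, k r := lintegral_sub_right_eq_self k s

theorem one_add_rpow_le_mul_exp {γ c r : ℝ} (hγ : 0 ≤ γ) (hc : 0 < c) (hr : 0 ≤ r) :
    (1 + r) ^ γ ≤ ((c + γ) / c) ^ γ * Real.exp (c * r) := by
  set ε := c / (c + γ) with hε
  have hε0 : 0 < ε := by positivity
  have hε1 : ε ≤ 1 := div_le_one_of_le₀ (by linarith) (by positivity)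
  have hεγ : ε * γ ≤ c := by
    rw [hε, div_mul_eq_mul_div, div_le_iff₀ (by positivity)]
    nlinarith
  have hbase : 1 + r ≤ Real.exp (ε * r) / ε := by
    rw [le_div_iff₀ hε0]
    nlinarith [Real.add_one_le_exp (ε * r)]
  calc (1 + r) ^ γ ≤ (Real.exp (ε * r) / ε) ^ γ := by gcongr
    _ = ((c + γ) / c) ^ γ * Real.exp (ε * γ * r) := by
        rw [Real.div_rpow (Real.exp_pos _).le hε0.le, ← Real.exp_mul,
          show (c + γ) / c = ε⁻¹ by rw [hε, inv_div], Real.inv_rpow hε0.le]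
        ring_nf
    _ ≤ ((c + γ) / c) ^ γ * Real.exp (c * r) := by gcongr

theorem div_rpow_le_mul_exp_sub (γ : ℝ) {c s t : ℝ} (hc : 0 < c) (hs : 1 ≤ s) (hst : s ≤ t) :
    (t / s) ^ γ ≤ ((c + max γ 0) / c) ^ max γ 0 * Real.exp (c * (t - s)) := by
  have hs0 : 0 < s := by linarith
  have hts : 1 ≤ t / s := (one_le_div hs0).2 hst
  have hts' : t / s ≤ 1 + (t - s) := by
    rw [div_le_iff₀ hs0]
    nlinarith
  calc (t / s) ^ γ ≤ (t / s) ^ max γ 0 := Real.rpow_le_rpow_of_exponent_le hts (le_max_left _ _)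
    _ ≤ (1 + (t - s)) ^ max γ 0 := by gcongr
    _ ≤ _ := one_add_rpow_le_mul_exp (le_max_right _ _) hc (by linarith)

theorem lintegral_indicator_Ici_exp_mul {c : ℝ} (hc : c < 0) :
    ∫⁻ r, (Ici 0).indicator (fun r => ENNReal.ofReal (Real.exp (c * r))) r
      = ENNReal.ofReal (-c⁻¹) := by
  rw [lintegral_indicator measurableSet_Ici, Measure.restrict_congr_set Ioi_ae_eq_Ici.symm,
    ← ofReal_integral_eq_lintegral_ofReal (integrableOn_exp_mul_Ioi hc 0)
      (Eventually.of_forall fun r => (Real.exp_pos _).le), integral_exp_mul_Ioi hc]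
  simp [div_eq_inv_mul]

theorem HasCompactSupport.integrable_sq_mul_rpow {f : ℝ → ℝ} (hf : Continuous f)
    (hfc : HasCompactSupport f) (h0 : (0 : ℝ) ∉ tsupport f) (p : ℝ) :
    Integrable fun t => f t ^ 2 * t ^ p := by
  refine Continuous.integrable_of_hasCompactSupport ?_ (hfc.mono fun t ht => ?_)
  refine continuous_iff_continuousAt.2 fun t => ?_
  by_cases ht : t ∈ tsupport f
  · exact (hf.continuousAt.pow 2).mul
      (Real.continuousAt_rpow_const _ _ (Or.inl (ne_of_mem_of_not_mem ht h0)))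
  · refine (continuousAt_const (y := (0 : ℝ))).congr (EventuallyEq.symm ?_)
    filter_upwards [notMem_tsupport_iff_eventuallyEq.1 ht] with x hx
    simp [hx]
  · simp_all

theorem integral_le_mul_integral_of_lintegral_le {α : Type*} [MeasurableSpace α]
    {μ : Measure α} {F G : α → ℝ} {c : ℝ} (hF : 0 ≤ᵐ[μ] F) (hG : 0 ≤ᵐ[μ] G)
    (hGi : Integrable G μ) (hc : 0 ≤ c)
    (h : ∫⁻ a, ENNReal.ofReal (F a) ∂μ ≤ ENNReal.ofReal c * ∫⁻ a, ENNReal.ofReal (G a) ∂μ) :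
    ∫ a, F a ∂μ ≤ c * ∫ a, G a ∂μ := by
  by_cases hFi : Integrable F μ
  · rw [integral_eq_lintegral_of_nonneg_ae hF hFi.1, integral_eq_lintegral_of_nonneg_ae hG hGi.1,
      ← ENNReal.toReal_ofReal hc, ← ENNReal.toReal_mul]
    refine ENNReal.toReal_mono (ENNReal.mul_ne_top ENNReal.ofReal_ne_top ?_) h
    rw [← ofReal_integral_eq_lintegral_ofReal hGi hG]
    exact ENNReal.ofReal_ne_top
  · rw [integral_undef hFi]
    exact mul_nonneg hc (integral_nonneg_of_ae hG)

theorem lintegral_ofReal_sq_add_mul_le {α : Type*} [MeasurableSpace α] {μ : Measure α}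
    {a b w : α → ℝ} (ha : Measurable a) (hw : Measurable w) (hw0 : 0 ≤ᵐ[μ] w) {D : ℝ} (hD : 0 ≤ D)
    (h : ∫⁻ x, ENNReal.ofReal (a x ^ 2 * w x) ∂μ
      ≤ ENNReal.ofReal D * ∫⁻ x, ENNReal.ofReal (b x ^ 2 * w x) ∂μ) :
    ∫⁻ x, ENNReal.ofReal ((a x + b x) ^ 2 * w x) ∂μ
      ≤ ENNReal.ofReal (2 * D + 2) * ∫⁻ x, ENNReal.ofReal (b x ^ 2 * w x) ∂μ := by
  calc ∫⁻ x, ENNReal.ofReal ((a x + b x) ^ 2 * w x) ∂μ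
      ≤ ∫⁻ x, 2 * ENNReal.ofReal (a x ^ 2 * w x) + 2 * ENNReal.ofReal (b x ^ 2 * w x) ∂μ := by
        refine lintegral_mono_ae (hw0.mono fun x hx => ?_)
        rw [← ENNReal.ofReal_ofNat 2, ← ENNReal.ofReal_mul zero_le_two,
          ← ENNReal.ofReal_mul zero_le_two,
          ← ENNReal.ofReal_add (mul_nonneg zero_le_two (mul_nonneg (sq_nonneg _) hx))
            (mul_nonneg zero_le_two (mul_nonneg (sq_nonneg _) hx))]
        refine ENNReal.ofReal_le_ofReal ?_
        nlinarith [mul_nonneg (sq_nonneg (a x - b x)) hx]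
    _ = 2 * ∫⁻ x, ENNReal.ofReal (a x ^ 2 * w x) ∂μ
          + 2 * ∫⁻ x, ENNReal.ofReal (b x ^ 2 * w x) ∂μ := by
        rw [lintegral_add_left (by fun_prop), lintegral_const_mul' _ _ ENNReal.ofNat_ne_top,
          lintegral_const_mul' _ _ ENNReal.ofNat_ne_top]
    _ ≤ 2 * (ENNReal.ofReal D * ∫⁻ x, ENNReal.ofReal (b x ^ 2 * w x) ∂μ)
          + 2 * ∫⁻ x, ENNReal.ofReal (b x ^ 2 * w x) ∂μ := by gcongr
    _ = ENNReal.ofReal (2 * D + 2) * ∫⁻ x, ENNReal.ofReal (b x ^ 2 * w x) ∂μ := by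
        rw [ENNReal.ofReal_add (by positivity) zero_le_two, ENNReal.ofReal_mul zero_le_two,
          ENNReal.ofReal_ofNat, add_mul, mul_assoc]

theorem ENNReal.ofReal_sq_mul_rpow_two_mul (x : ℝ) {t : ℝ} (ht : 0 ≤ t) (γ : ℝ) :
    ENNReal.ofReal (x ^ 2 * t ^ (2 * γ)) = (‖x‖ₑ * ENNReal.ofReal (t ^ γ)) ^ 2 := by
  rw [Real.enorm_eq_ofReal_abs, ← ENNReal.ofReal_mul (abs_nonneg _),
    ← ENNReal.ofReal_pow (by positivity), mul_pow, sq_abs, mul_comm 2 γ, Real.rpow_mul ht,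
    Real.rpow_two]

section Duhamel

noncomputable def duhamel (l : ℝ) (f : ℝ → ℝ) (t : ℝ) : ℝ :=
  Real.exp (l * t) * ∫ s in (1 : ℝ)..t, Real.exp (-l * s) * f s

/-- Carries `s ^ γ * f s` to `t ^ γ * duhamel l f t`; `ℝ≥0∞`-valued for Schur's test. -/
noncomputable def duhamelKernel (l γ t s : ℝ) : ℝ≥0∞ :=
  if s ≤ t then ENNReal.ofReal (Real.exp (l * (t - s)) * (t / s) ^ γ) else 0

variable {l : ℝ} {f : ℝ → ℝ}

theorem duhamel_eq_integral_exp_mul_sub (t : ℝ) :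
    duhamel l f t = ∫ s in (1 : ℝ)..t, Real.exp (l * (t - s)) * f s := by
  rw [duhamel, ← intervalIntegral.integral_const_mul]
  congr 1 with s
  rw [← mul_assoc, ← Real.exp_add]
  ring_nf

theorem hasDerivAt_duhamel (hf : Continuous f) (t : ℝ) :
    HasDerivAt (duhamel l f) (l * duhamel l f t + f t) t := by
  have hg : Continuous fun s => Real.exp (-l * s) * f s := by fun_prop
  have hprim := intervalIntegral.integral_hasDerivAt_right (hg.intervalIntegrable 1 t)
    (hg.stronglyMeasurableAtFilter _ _) hg.continuousAt
  have hexp : HasDerivAt (fun t => Real.exp (l * t)) (Real.exp (l * t) * l) t := by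
    simpa using ((hasDerivAt_id t).const_mul l).exp
  refine (hexp.mul hprim).congr_deriv ?_
  rw [duhamel, ← mul_assoc (Real.exp _), ← Real.exp_add]
  simp only [neg_mul, add_neg_cancel, Real.exp_zero, one_mul]
  ring

theorem measurable_duhamelKernel (l γ : ℝ) : Measurable (Function.uncurry (duhamelKernel l γ)) :=
  Measurable.ite (measurableSet_le measurable_snd measurable_fst) (by fun_prop) measurable_const

theorem exists_duhamelKernel_le {l₀ : ℝ} (hl₀ : 0 < l₀) (γ : ℝ) :
    ∃ D : ℝ, 0 < D ∧ ∀ l ≤ -l₀, ∀ t s, 1 ≤ s → duhamelKernel l γ t s ≤ ENNReal.ofReal D *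
      (Ici 0).indicator (fun r => ENNReal.ofReal (Real.exp (l / 2 * r))) (t - s) := by
  refine ⟨((l₀ / 2 + max γ 0) / (l₀ / 2)) ^ max γ 0, by positivity, fun l hl t s hs => ?_⟩
  unfold duhamelKernel
  split_ifs with hst
  · rw [indicator_of_mem (by simpa using hst), ← ENNReal.ofReal_mul (by positivity)]
    refine ENNReal.ofReal_le_ofReal ?_
    calc Real.exp (l * (t - s)) * (t / s) ^ γ
        ≤ Real.exp (l * (t - s)) * (((l₀ / 2 + max γ 0) / (l₀ / 2)) ^ max γ 0
            * Real.exp (l₀ / 2 * (t - s))) := by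
          gcongr
          exact div_rpow_le_mul_exp_sub γ (by positivity) hs hst
      _ = ((l₀ / 2 + max γ 0) / (l₀ / 2)) ^ max γ 0 * Real.exp ((l + l₀ / 2) * (t - s)) := by
          rw [mul_left_comm, ← Real.exp_add]
          ring_nf
      _ ≤ _ := by
          gcongr
          nlinarith
  · exact zero_le

theorem enorm_duhamel_mul_rpow_le (γ : ℝ) {t : ℝ} (ht : 1 ≤ t) :
    ‖duhamel l f t‖ₑ * ENNReal.ofReal (t ^ γ)
      ≤ ∫⁻ s in Ioi 1, duhamelKernel l γ t s * (‖f s‖ₑ * ENNReal.ofReal (s ^ γ)) := by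
  calc ‖duhamel l f t‖ₑ * ENNReal.ofReal (t ^ γ)
      ≤ (∫⁻ s in Ioc 1 t, ‖Real.exp (l * (t - s)) * f s‖ₑ) * ENNReal.ofReal (t ^ γ) := by
        rw [duhamel_eq_integral_exp_mul_sub, intervalIntegral.integral_of_le ht]
        gcongr
        exact enorm_integral_le_lintegral_enorm _
    _ = ∫⁻ s in Ioc 1 t, ‖Real.exp (l * (t - s)) * f s‖ₑ * ENNReal.ofReal (t ^ γ) :=
        (lintegral_mul_const' _ _ ENNReal.ofReal_ne_top).symm
    _ = ∫⁻ s in Ioc 1 t, duhamelKernel l γ t s * (‖f s‖ₑ * ENNReal.ofReal (s ^ γ)) := by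
        refine setLIntegral_congr_fun measurableSet_Ioc fun s hs => ?_
        have hs0 : 0 < s := one_pos.trans hs.1
        rw [duhamelKernel, if_pos hs.2, Real.enorm_eq_ofReal_abs, Real.enorm_eq_ofReal_abs,
          ← ENNReal.ofReal_mul (abs_nonneg _), ← ENNReal.ofReal_mul (abs_nonneg _),
          ← ENNReal.ofReal_mul (by positivity), abs_mul, abs_of_pos (Real.exp_pos _),
          Real.div_rpow (hs0.le.trans hs.2) hs0.le]
        field_simp
    _ ≤ _ := lintegral_mono_set Ioc_subset_Ioi_self

end Duhamel

theorem exists_lintegral_sq_duhamel_le {l₀ : ℝ} (hl₀ : 0 < l₀) (γ : ℝ) :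
    ∃ D : ℝ, 0 < D ∧ ∀ l ≤ -l₀, ∀ f : ℝ → ℝ, Measurable f →
      ∫⁻ t in Ioi 1, ENNReal.ofReal ((l * duhamel l f t) ^ 2 * t ^ (2 * γ))
        ≤ ENNReal.ofReal D * ∫⁻ t in Ioi 1, ENNReal.ofReal (f t ^ 2 * t ^ (2 * γ)) := by
  obtain ⟨D, hD, hK⟩ := exists_duhamelKernel_le hl₀ γ
  refine ⟨4 * D ^ 2, by positivity, fun l hl f hf => ?_⟩
  have hl0 : l / 2 < 0 := by linarith
  have hl_ne : l ≠ 0 := by linarith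
  have hschur := lintegral_sq_lintegral_mul_le_of_le_sub measurableSet_Ioi
    (measurable_duhamelKernel l γ)
    (k := fun r => ENNReal.ofReal D *
      (Ici 0).indicator (fun r => ENNReal.ofReal (Real.exp (l / 2 * r))) r)
    (fun t s hs => hK l hl t s (le_of_lt hs))
    (g := fun s => ‖f s‖ₑ * ENNReal.ofReal (s ^ γ)) (by fun_prop)
  rw [lintegral_const_mul' _ _ ENNReal.ofReal_ne_top, lintegral_indicator_Ici_exp_mul hl0]
    at hschur
  have hweight : ∀ {x t : ℝ}, t ∈ Ioi (1 : ℝ) →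
      ENNReal.ofReal (x ^ 2 * t ^ (2 * γ)) = (‖x‖ₑ * ENNReal.ofReal (t ^ γ)) ^ 2 :=
    fun ht => ENNReal.ofReal_sq_mul_rpow_two_mul _ (zero_le_one.trans (le_of_lt ht)) γ
  calc ∫⁻ t in Ioi 1, ENNReal.ofReal ((l * duhamel l f t) ^ 2 * t ^ (2 * γ))
      = ENNReal.ofReal (l ^ 2) *
          ∫⁻ t in Ioi 1, (‖duhamel l f t‖ₑ * ENNReal.ofReal (t ^ γ)) ^ 2 := by
        rw [← lintegral_const_mul' _ _ ENNReal.ofReal_ne_top]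
        refine setLIntegral_congr_fun measurableSet_Ioi fun t ht => ?_
        rw [← hweight ht, ← ENNReal.ofReal_mul (sq_nonneg _), mul_pow, mul_assoc]
    _ ≤ ENNReal.ofReal (l ^ 2) * ∫⁻ t in Ioi 1,
          (∫⁻ s in Ioi 1, duhamelKernel l γ t s * (‖f s‖ₑ * ENNReal.ofReal (s ^ γ))) ^ 2 := by
        gcongr ENNReal.ofReal (l ^ 2) * ?_
        refine setLIntegral_mono' (measurableSet_Ioi (a := (1 : ℝ))) fun t ht => ?_
        gcongr
        exact enorm_duhamel_mul_rpow_le γ (le_of_lt ht)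
    _ ≤ ENNReal.ofReal (l ^ 2) * ((ENNReal.ofReal D * ENNReal.ofReal (-(l / 2)⁻¹)) ^ 2
          * ∫⁻ s in Ioi 1, (‖f s‖ₑ * ENNReal.ofReal (s ^ γ)) ^ 2) := by gcongr
    _ = ENNReal.ofReal (4 * D ^ 2) * ∫⁻ t in Ioi 1, ENNReal.ofReal (f t ^ 2 * t ^ (2 * γ)) := by
        rw [setLIntegral_congr_fun measurableSet_Ioi fun t ht => (hweight ht).symm,
          ← mul_assoc, ← ENNReal.ofReal_mul hD.le,
          ← ENNReal.ofReal_pow (mul_nonneg hD.le (neg_nonneg.2 (inv_nonpos.2 hl0.le))),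
          ← ENNReal.ofReal_mul (sq_nonneg _)]
        congr 2
        field_simp
        ring
/-- First-order ODE `u' - λ u = f` with `λ ≤ -λ₀ < 0`: the solution
`u(t) = e^{λ t} ∫_1^t e^{-λ s} f(s) ds` is differentiable on `[1, ∞)`, solves the
equation there, and satisfies the weighted estimates with a constant depending only
on `λ₀, γ`. -/
theorem first_order_ode_neg_eigenvalue (l₀ γ : ℝ) (hl₀ : 0 < l₀) :
    ∃ C : ℝ, 0 < C ∧ ∀ l : ℝ, l ≤ -l₀ →
      ∀ f : ℝ → ℝ, Continuous f → HasCompactSupport f → tsupport f ⊆ Ioi 1 →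
      ∀ u : ℝ → ℝ,
        (∀ t : ℝ, u t = Real.exp (l * t) * ∫ s in (1 : ℝ)..t, Real.exp (-l * s) * f s) →
        (∀ t : ℝ, 1 ≤ t → HasDerivAt u (l * u t + f t) t) ∧
        l ^ 2 * (∫ t in Ioi (1 : ℝ), (u t) ^ 2 * t ^ (2 * γ))
          ≤ C * ∫ t in Ioi (1 : ℝ), (f t) ^ 2 * t ^ (2 * γ) ∧
        (∫ t in Ioi (1 : ℝ), (deriv u t) ^ 2 * t ^ (2 * γ))
          ≤ C * ∫ t in Ioi (1 : ℝ), (f t) ^ 2 * t ^ (2 * γ) := by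
  obtain ⟨D, hD, hest⟩ := exists_lintegral_sq_duhamel_le hl₀ γ
  refine ⟨2 * D + 2, by positivity, fun l hl f hf hfc hfs u hu => ?_⟩
  obtain rfl : u = duhamel l f := funext hu
  have hderiv : ∀ t, HasDerivAt (duhamel l f) (l * duhamel l f t + f t) t :=
    hasDerivAt_duhamel hf
  have hu_cont : Continuous (duhamel l f) :=
    continuous_iff_continuousAt.2 fun t => (hderiv t).continuousAt
  have hf_int : Integrable (fun t => f t ^ 2 * t ^ (2 * γ)) (volume.restrict (Ioi 1)) :=
    (hfc.integrable_sq_mul_rpow hf (fun h => absurd (hfs h) (by norm_num)) _).integrableOn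
  have hw : 0 ≤ᵐ[volume.restrict (Ioi 1)] fun t : ℝ => t ^ (2 * γ) :=
    ae_restrict_of_forall_mem measurableSet_Ioi fun t ht =>
      Real.rpow_nonneg (zero_le_one.trans (le_of_lt ht)) _
  have hnonneg : ∀ g : ℝ → ℝ, 0 ≤ᵐ[volume.restrict (Ioi 1)] fun t => g t ^ 2 * t ^ (2 * γ) :=
    fun g => hw.mono fun t ht => mul_nonneg (sq_nonneg _) ht
  have hu_est := hest l hl f hf.measurable
  refine ⟨fun t _ => hderiv t, ?_, ?_⟩
  · rw [← integral_const_mul]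
    simp_rw [← mul_assoc, ← mul_pow]
    refine integral_le_mul_integral_of_lintegral_le (hnonneg _) (hnonneg f) hf_int
      (by positivity) (hu_est.trans ?_)
    gcongr
    linarith
  · rw [funext fun t => (hderiv t).deriv]
    exact integral_le_mul_integral_of_lintegral_le (hnonneg _) (hnonneg f) hf_int
      (by positivity) (lintegral_ofReal_sq_add_mul_le (by fun_prop) (by fun_prop) hw hD.le hu_est)
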